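/- Let K be a subring of ℂ. Let G be the directed union of a family of subgroups {G_i}_{i∈I} (i.e. the family is directed under inclusion and G = ∪_{i∈I} G_i), and assume each G_i fulfills the Atiyah conjecture of order Λ_i over KG_i, where ℤ ⊆ Λ_i ⊆ ℚ are additive subgroups. Then G fulfills the Atiyah conjecture of order Λ over KG, where Λ is the additive subgroup of ℚ generated by ∪_{i∈I} Λ_i. -/

import Mathlib

noncomputable section

open scoped ENNReal

instance : Fact ((1 : ℝ≥0∞) ≤ 2) := ⟨one_le_two⟩

/-- The Hilbert space `ℓ²(G)ⁿ`, modeled as square-summable families indexed by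
`Fin n × G`. -/
abbrev L2 (G : Type*) (n : ℕ) : Type _ := lp (fun _ : Fin n × G => ℂ) 2

variable {G : Type*} [Group G]

/-- Convolution of a group ring element `a ∈ ℂG` with a function `x : G → ℂ`:
`(a ⋆ x)(g) = ∑_h a(h) · x(h⁻¹g)` (a finite sum over the support of `a`). -/
def conv (a : MonoidAlgebra ℂ G) (x : G → ℂ) (g : G) : ℂ :=
  ∑ h ∈ a.coeff.support, a.coeff h * x (h⁻¹ * g)

/-- The kernel of the bounded operator `ℓ²(G)ⁿ → ℓ²(G)ᵐ` given by left convolution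
with the matrix `A` over the group ring `ℂG`. -/
def matrixKernel {m n : ℕ} (A : Matrix (Fin m) (Fin n) (MonoidAlgebra ℂ G)) :
    Submodule ℂ (L2 G n) where
  carrier := {x | ∀ (i : Fin m) (g : G),
    ∑ j : Fin n, conv (A i j) (fun g' => x (j, g')) g = 0}
  zero_mem' := by
    intro i g
    simp [conv]
  add_mem' := by
    intro x y hx hy i g
    have hx' := hx i g
    have hy' := hy i g
    simp only [conv, lp.coeFn_add, Pi.add_apply, mul_add, Finset.sum_add_distrib] at *
    rw [hx', hy', add_zero]
  smul_mem' := by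
    intro c x hx i g
    have hx' := hx i g
    simp only [conv, lp.coeFn_smul, Pi.smul_apply, smul_eq_mul] at *
    have : (∑ j : Fin _, ∑ h ∈ (A i j).coeff.support, (A i j).coeff h * (c * x (j, h⁻¹ * g)))
        = c * ∑ j : Fin _, ∑ h ∈ (A i j).coeff.support, (A i j).coeff h * x (j, h⁻¹ * g) := by
      rw [Finset.mul_sum]
      exact Finset.sum_congr rfl fun j _ => by
        rw [Finset.mul_sum]
        exact Finset.sum_congr rfl fun h _ => by ring
    rw [this, hx', mul_zero]

/-- The vector `eᵢ ∈ ℓ²(G)ⁿ` whose `i`-th coordinate is the characteristic function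
of the identity element of `G` and whose other coordinates vanish. -/
def stdVec (G : Type*) [Group G] (n : ℕ) (i : Fin n) : L2 G n :=
  letI : DecidableEq (Fin n × G) := Classical.decEq _
  lp.single 2 (i, (1 : G)) 1

/-- The von Neumann dimension `dim_G(ker A) = ∑ᵢ ⟨P eᵢ, eᵢ⟩` where `P` is the
orthogonal projection of `ℓ²(G)ⁿ` onto the (closed) kernel of `A`. -/
def dimKer {m n : ℕ} (A : Matrix (Fin m) (Fin n) (MonoidAlgebra ℂ G)) : ℝ :=
  letI S := (matrixKernel A).topologicalClosure
  haveI : CompleteSpace S := (Submodule.isClosed_topologicalClosure _).completeSpace_coe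
  ∑ i : Fin n,
    (inner ℂ ((S.orthogonalProjectionOnto (stdVec G n i) : L2 G n)) (stdVec G n i) : ℂ).re

/-- `G` fulfills the Atiyah conjecture of order `Λ` over `KG` (for `K ⊆ ℂ`):
the von Neumann dimension of the kernel of any matrix over `KG` lies in `Λ`. -/
def AtiyahOfOrder (G : Type*) [Group G] (K : Subring ℂ) (Λ : AddSubgroup ℚ) : Prop :=
  ∀ (m n : ℕ) (A : Matrix (Fin m) (Fin n) (MonoidAlgebra ℂ G)),
    (∀ i j g, (A i j).coeff g ∈ K) → ∃ q ∈ Λ, (q : ℝ) = dimKer A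

/-- The additive subgroup of `ℚ` generated by the inverses of the orders of the
finite subgroups of `G`. -/
def strongLambda (G : Type*) [Group G] : AddSubgroup ℚ :=
  AddSubgroup.closure {q : ℚ | ∃ F : Subgroup G, (F : Set G).Finite ∧ q = 1 / (Nat.card F : ℚ)}

/-- The strong Atiyah conjecture for `G` over `KG`. -/
def StrongAtiyah (G : Type*) [Group G] (K : Subring ℂ) : Prop :=
  AtiyahOfOrder G K (strongLambda G)

/-- The strong Atiyah conjecture over `KG` in the torsion-free case: all kernel
dimensions of matrices over `KG` are integers. -/
def StrongAtiyahInt (G : Type*) [Group G] (K : Subring ℂ) : Prop :=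
  ∀ (m n : ℕ) (A : Matrix (Fin m) (Fin n) (MonoidAlgebra ℂ G)),
    (∀ i j g, (A i j).coeff g ∈ K) → ∃ k : ℤ, (k : ℝ) = dimKer A

/-- The rationals, as a subring of `ℂ`. -/
def ratSubring : Subring ℂ := (algebraMap ℚ ℂ).range

/-!
The coefficients of a matrix `A` over `KG` involve finitely many group elements, so by
directedness they all lie in one `G k`, and `A` comes from a matrix `A'` over `K(G k)`. It remains
to see that `dim_{G k}(ker A') = dim_G(ker A)`. Extension by zero `E : ℓ²(G k)ⁿ → ℓ²(G)ⁿ` is an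
isometry whose adjoint is restriction, and because the coefficients are supported in `G k` both
maps send kernels into kernels. Hence `E` intertwines the two kernel projections,
`P (E v) = E (P' v)`, and as `E eᵢ = eᵢ` we get `⟨P eᵢ, eᵢ⟩ = ⟨E (P' eᵢ), eᵢ⟩ = ⟨P' eᵢ, eᵢ⟩`.
-/

namespace lp

variable {E : Type*} [NormedAddCommGroup E] {α β : Type*} {f : α → β}

theorem memℓp_extend (x : lp (fun _ : α => E) 2) (hf : Function.Injective f) :
    Memℓp (Function.extend f x 0) 2 := by
  have hp : 0 < (2 : ℝ≥0∞).toReal := by norm_num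
  rw [memℓp_gen_iff hp]
  have hnorm : (fun b => ‖Function.extend f x 0 b‖ ^ (2 : ℝ≥0∞).toReal)
      = Function.extend f (fun a => ‖x a‖ ^ (2 : ℝ≥0∞).toReal) 0 := by
    funext b
    rw [Function.apply_extend (fun v : E => ‖v‖ ^ (2 : ℝ≥0∞).toReal)]
    congr 1
    funext b
    simp
  rw [hnorm, summable_extend_zero hf]
  exact (memℓp_gen_iff hp).1 x.2

theorem memℓp_comp (y : lp (fun _ : β => E) 2) (hf : Function.Injective f) :
    Memℓp (y ∘ f) 2 := by
  have hp : 0 < (2 : ℝ≥0∞).toReal := by norm_num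
  exact (memℓp_gen_iff hp).2 (((memℓp_gen_iff hp).1 y.2).comp_injective hf)

def restrict (hf : Function.Injective f) (y : lp (fun _ : β => E) 2) : lp (fun _ : α => E) 2 :=
  ⟨y ∘ f, memℓp_comp y hf⟩

def extendZero (hf : Function.Injective f) (x : lp (fun _ : α => E) 2) : lp (fun _ : β => E) 2 :=
  ⟨Function.extend f x 0, memℓp_extend x hf⟩

theorem restrict_apply (hf : Function.Injective f) (y : lp (fun _ : β => E) 2) (a : α) :
    restrict hf y a = y (f a) := rfl

theorem extendZero_apply_self (hf : Function.Injective f) (x : lp (fun _ : α => E) 2) (a : α) :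
    extendZero hf x (f a) = x a :=
  hf.extend_apply _ _ a

theorem extendZero_apply_of_notMem (hf : Function.Injective f) (x : lp (fun _ : α => E) 2)
    {b : β} (hb : b ∉ Set.range f) : extendZero hf x b = 0 :=
  Function.extend_apply' _ _ _ hb

theorem restrict_extendZero (hf : Function.Injective f) (x : lp (fun _ : α => E) 2) :
    restrict hf (extendZero hf x) = x :=
  lp.ext (funext (extendZero_apply_self hf x))

theorem extendZero_single [DecidableEq α] [DecidableEq β] (hf : Function.Injective f) (a : α)
    (v : E) : extendZero hf (lp.single 2 a v) = lp.single 2 (f a) v := by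
  ext b
  by_cases hb : b ∈ Set.range f
  · obtain ⟨a', rfl⟩ := hb
    simp only [extendZero_apply_self, lp.single_apply, Pi.single_apply, hf.eq_iff]
  · rw [extendZero_apply_of_notMem hf _ hb, lp.single_apply, Pi.single_eq_of_ne]
    rintro rfl
    exact hb ⟨a, rfl⟩

variable (𝕜 : Type*) [RCLike 𝕜] [InnerProductSpace 𝕜 E]

theorem inner_extendZero_left (hf : Function.Injective f) (x : lp (fun _ : α => E) 2)
    (y : lp (fun _ : β => E) 2) :
    inner 𝕜 (extendZero hf x) y = inner 𝕜 x (restrict hf y) := by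
  rw [lp.inner_eq_tsum, lp.inner_eq_tsum, ← hf.tsum_eq]
  · simp only [extendZero_apply_self, restrict_apply]
  · intro b hb
    by_contra hbf
    simp [extendZero_apply_of_notMem hf x hbf] at hb

def extendZeroₗᵢ (hf : Function.Injective f) :
    lp (fun _ : α => E) 2 →ₗᵢ[𝕜] lp (fun _ : β => E) 2 :=
  LinearMap.isometryOfInner
    { toFun := extendZero hf
      map_add' := fun x y => lp.ext <| by
        show Function.extend f ⇑(x + y) 0 = Function.extend f x 0 + Function.extend f y 0
        rw [lp.coeFn_add, ← Function.extend_add, add_zero]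
      map_smul' := fun c x => lp.ext <| by
        show Function.extend f ⇑(c • x) 0 = c • Function.extend f x 0
        rw [lp.coeFn_smul, ← Function.extend_smul, smul_zero] }
    fun x y => by
      simp only [LinearMap.coe_mk, AddHom.coe_mk, inner_extendZero_left, restrict_extendZero]

theorem extendZeroₗᵢ_apply (hf : Function.Injective f) (x : lp (fun _ : α => E) 2) :
    extendZeroₗᵢ 𝕜 hf x = extendZero hf x := rfl

end lp

namespace Submodule

variable {𝕜 U V : Type*} [RCLike 𝕜] [NormedAddCommGroup U] [InnerProductSpace 𝕜 U]
  [NormedAddCommGroup V] [InnerProductSpace 𝕜 V]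

theorem starProjection_topologicalClosure_apply_of_adjoint (T : U →L[𝕜] V) (R : V → U)
    (hTR : ∀ u v, inner 𝕜 (T u) v = inner 𝕜 u (R v)) {M : Submodule 𝕜 U} {N : Submodule 𝕜 V}
    [M.topologicalClosure.HasOrthogonalProjection] [N.topologicalClosure.HasOrthogonalProjection]
    (hT : ∀ x ∈ M, T x ∈ N) (hR : ∀ y ∈ N, R y ∈ M) (u : U) :
    N.topologicalClosure.starProjection (T u) = T (M.topologicalClosure.starProjection u) := by
  apply eq_starProjection_of_mem_of_inner_eq_zero
  · rw [← SetLike.mem_coe, topologicalClosure_coe]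
    refine map_mem_closure T.continuous ?_ hT
    rw [← topologicalClosure_coe]
    exact starProjection_apply_mem _ u
  · have hperpM : u - M.topologicalClosure.starProjection u ∈ Mᗮ := by
      rw [← orthogonal_closure]
      exact sub_starProjection_mem_orthogonal u
    have hperpN : T (u - M.topologicalClosure.starProjection u) ∈ N.topologicalClosureᗮ := by
      rw [orthogonal_closure, mem_orthogonal']
      intro y hy
      rw [hTR]
      exact inner_left_of_mem_orthogonal (hR y hy) hperpM
    intro w hw
    rw [← map_sub]
    exact inner_left_of_mem_orthogonal hw hperpN

end Submodule

def MonoidAlgebra.restrictSubgroup (H : Subgroup G) (a : MonoidAlgebra ℂ G) :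
    MonoidAlgebra ℂ H :=
  MonoidAlgebra.ofCoeff (a.coeff.subtypeDomain (· ∈ H))

open MonoidAlgebra

variable {H : Subgroup G}

theorem conv_restrictSubgroup {a : MonoidAlgebra ℂ G} (ha : (a.coeff.support : Set G) ⊆ H)
    (x : G → ℂ) (h : H) : conv (restrictSubgroup H a) (fun h' => x h') h = conv a x h := by
  classical
  rw [conv, conv, ← Finset.sum_subtype_of_mem _ ha]
  exact Finset.sum_congr Finsupp.support_subtypeDomain fun _ _ => rfl

theorem conv_eq_zero_of_notMem {a : MonoidAlgebra ℂ G} (ha : (a.coeff.support : Set G) ⊆ H)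
    {x : G → ℂ} (hx : ∀ g ∉ H, x g = 0) {g : G} (hg : g ∉ H) : conv a x g = 0 := by
  refine Finset.sum_eq_zero fun h hh => ?_
  rw [hx, mul_zero]
  exact fun hmem => hg (by simpa using H.mul_mem (ha hh) hmem)

theorem injective_prodMap_val (n : ℕ) (H : Subgroup G) :
    Function.Injective (Prod.map id Subtype.val : Fin n × H → Fin n × G) :=
  Function.injective_id.prodMap Subtype.val_injective

theorem stdVec_eq_single (G : Type*) [Group G] {n : ℕ} [DecidableEq (Fin n × G)] (i : Fin n) :
    stdVec G n i = lp.single 2 (i, 1) 1 := by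
  unfold stdVec
  congr
  exact Subsingleton.elim _ _

theorem extendZero_stdVec {n : ℕ} (H : Subgroup G) (i : Fin n) :
    lp.extendZero (injective_prodMap_val n H) (stdVec H n i) = stdVec G n i := by
  classical
  rw [stdVec_eq_single, stdVec_eq_single, lp.extendZero_single]
  rfl

theorem restrict_stdVec {n : ℕ} (H : Subgroup G) (i : Fin n) :
    lp.restrict (injective_prodMap_val n H) (stdVec G n i) = stdVec H n i := by
  rw [← extendZero_stdVec, lp.restrict_extendZero]

variable {m n : ℕ} {A : Matrix (Fin m) (Fin n) (MonoidAlgebra ℂ G)}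

theorem restrict_mem_matrixKernel (hA : ∀ i j, ((A i j).coeff.support : Set G) ⊆ H)
    {y : L2 G n} (hy : y ∈ matrixKernel A) :
    lp.restrict (injective_prodMap_val n H) y ∈ matrixKernel (A.map (restrictSubgroup H)) := by
  intro i h
  convert hy i h using 2 with j
  exact conv_restrictSubgroup (hA i j) (fun g => y (j, g)) h

theorem extendZero_mem_matrixKernel (hA : ∀ i j, ((A i j).coeff.support : Set G) ⊆ H)
    {w : L2 H n} (hw : w ∈ matrixKernel (A.map (restrictSubgroup H))) :
    lp.extendZero (injective_prodMap_val n H) w ∈ matrixKernel A := by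
  intro i g
  by_cases hg : g ∈ H
  · convert hw i ⟨g, hg⟩ using 2 with j
    refine (conv_restrictSubgroup (hA i j) _ ⟨g, hg⟩).symm.trans ?_
    congr 1
    funext h
    exact lp.extendZero_apply_self (injective_prodMap_val n H) w (j, h)
  · refine Finset.sum_eq_zero fun j _ => conv_eq_zero_of_notMem (hA i j) (fun g' hg' => ?_) hg
    refine lp.extendZero_apply_of_notMem _ _ ?_
    rintro ⟨⟨j', h⟩, hh⟩
    simp only [Prod.map, Prod.mk.injEq] at hh
    exact hg' (hh.2 ▸ h.2)

theorem dimKer_map_restrictSubgroup (hA : ∀ i j, ((A i j).coeff.support : Set G) ⊆ H) :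
    dimKer (A.map (restrictSubgroup H)) = dimKer A := by
  unfold dimKer
  refine Finset.sum_congr rfl fun i _ => ?_
  simp only [← Submodule.starProjection_apply]
  have hinj := injective_prodMap_val n H
  have hproj := Submodule.starProjection_topologicalClosure_apply_of_adjoint
    (lp.extendZeroₗᵢ ℂ hinj).toContinuousLinearMap (lp.restrict hinj)
    (lp.inner_extendZero_left ℂ hinj) (fun _ => extendZero_mem_matrixKernel hA)
    (fun _ => restrict_mem_matrixKernel hA) (stdVec H n i)
  simp only [LinearIsometry.coe_toContinuousLinearMap, lp.extendZeroₗᵢ_apply,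
    extendZero_stdVec] at hproj
  rw [hproj, lp.inner_extendZero_left, restrict_stdVec]

theorem exists_support_subset_of_directed {ι : Type*} (Gi : ι → Subgroup G)
    (hdir : ∀ i j : ι, ∃ k, Gi i ≤ Gi k ∧ Gi j ≤ Gi k) (hcover : ∀ g : G, ∃ i, g ∈ Gi i)
    (A : Matrix (Fin m) (Fin n) (MonoidAlgebra ℂ G)) :
    ∃ k, ∀ i j, ((A i j).coeff.support : Set G) ⊆ Gi k := by
  classical
  have : Nonempty ι := ⟨(hcover 1).choose⟩
  obtain ⟨k, hk⟩ := Directed.exists_mem_subset_of_finset_subset_biUnion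
    (f := fun i => (Gi i : Set G)) hdir
    (s := Finset.univ.biUnion fun i => Finset.univ.biUnion fun j => (A i j).coeff.support)
    fun g _ => Set.mem_iUnion.2 (hcover g)
  refine ⟨k, fun i j g hg => hk ?_⟩
  simp only [Finset.coe_biUnion, Finset.coe_univ, Set.mem_univ, Set.iUnion_true, Set.mem_iUnion]
  exact ⟨i, j, hg⟩

theorem atiyah_of_directed_union_general (G : Type*) [Group G] (K : Subring ℂ)
    (ι : Type*) (Gi : ι → Subgroup G)
    (hdir : ∀ i j : ι, ∃ k, Gi i ≤ Gi k ∧ Gi j ≤ Gi k)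
    (hcover : ∀ g : G, ∃ i, g ∈ Gi i)
    (Λ : ι → AddSubgroup ℚ)
    (h : ∀ i, AtiyahOfOrder (Gi i) K (Λ i)) :
    AtiyahOfOrder G K (AddSubgroup.closure (⋃ i, (Λ i : Set ℚ))) := by
  intro m n A hA
  obtain ⟨k, hk⟩ := exists_support_subset_of_directed Gi hdir hcover A
  obtain ⟨q, hq, hqA⟩ := h k m n (A.map (restrictSubgroup (Gi k))) fun i j g => hA i j g
  exact ⟨q, AddSubgroup.subset_closure (Set.mem_iUnion.2 ⟨k, hq⟩),
    hqA.trans (dimKer_map_restrictSubgroup hk)⟩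

/-- **Proposition (directed unions).** Let `G` be the directed union of subgroups
`G i`, each fulfilling the Atiyah conjecture of order `Λ i` over `K(G i)`. Then `G`
fulfills the Atiyah conjecture over `KG` of order the additive subgroup of `ℚ`
generated by the union of the `Λ i`. -/
theorem atiyah_of_directed_union (G : Type*) [Group G] (K : Subring ℂ)
    (ι : Type*) (Gi : ι → Subgroup G)
    (hdir : ∀ i j : ι, ∃ k, Gi i ≤ Gi k ∧ Gi j ≤ Gi k)
    (hcover : ∀ g : G, ∃ i, g ∈ Gi i)
    (Λ : ι → AddSubgroup ℚ) (hΛ : ∀ i, (1 : ℚ) ∈ Λ i)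
    (h : ∀ i, AtiyahOfOrder (Gi i) K (Λ i)) :
    AtiyahOfOrder G K (AddSubgroup.closure (⋃ i, (Λ i : Set ℚ))) :=
  atiyah_of_directed_union_general G K ι Gi hdir hcover Λ h
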